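/- The inclusion functor 𝟚 → 𝕀 of the walking arrow into the walking isomorphism is an epimorphism in Cat. -/

import Mathlib

open CategoryTheory

/-- The walking isomorphism category `𝕀 = {0 ≅ 1}`: two objects, with exactly one
morphism between any two objects. -/
def WalkingIso : Type := Fin 2

instance : Category _root_.WalkingIso where
  Hom _ _ := PUnit
  id _ := PUnit.unit
  comp _ _ := PUnit.unit

/-- The inclusion of the walking arrow `𝟚 = {0 → 1}` (the preorder `Fin 2`)
into the walking isomorphism `𝕀`. -/
def arrowToIso : (Fin 2) ⥤ _root_.WalkingIso where
  obj x := x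
  map _ := PUnit.unit

/-!
A functor out of `𝕀` is determined by its values on objects and on the arrow `0 ⟶ 1`:
since `𝟚` is totally ordered, every morphism of `𝕀` is either the image of a morphism of `𝟚`
or the inverse of one, and functors preserve inverses.
-/

namespace WalkingIso

instance instSubsingletonHom {X Y : _root_.WalkingIso} : Subsingleton (X ⟶ Y) :=
  inferInstanceAs (Subsingleton PUnit)

instance isIso_hom {X Y : _root_.WalkingIso} (f : X ⟶ Y) : IsIso f :=
  ⟨⟨PUnit.unit, rfl, rfl⟩⟩

end WalkingIso

theorem functor_eq_of_arrowToIso_comp_eq {Z : Type*} [Category Z]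
    {G H : _root_.WalkingIso ⥤ Z} (w : arrowToIso ⋙ G = arrowToIso ⋙ H) : G = H := by
  have hobj : ∀ X, G.obj X = H.obj X := Functor.congr_obj (C := Fin 2) w
  refine CategoryTheory.Functor.ext hobj fun X Y f => ?_
  rcases le_total (α := Fin 2) X Y with hab | hba
  · obtain rfl : f = arrowToIso.map (homOfLE hab) := Subsingleton.elim _ _
    exact Functor.congr_hom w _
  · obtain rfl : f = (asIso (arrowToIso.map (homOfLE hba))).inv := Subsingleton.elim _ _
    exact Functor.congr_inv_of_congr_hom _ _ _ (hobj Y) (hobj X)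
      (Functor.congr_hom w (homOfLE hba))

/-- The inclusion `𝟚 → 𝕀` of the walking arrow into the walking isomorphism is an
epimorphism in `Cat`. -/
theorem arrowToIso_epi :
    Epi (show Cat.of (Fin 2) ⟶ Cat.of _root_.WalkingIso from arrowToIso.toCatHom) :=
  ⟨fun _ _ w => Cat.ext (functor_eq_of_arrowToIso_comp_eq (congrArg Cat.Hom.toFunctor w))⟩
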